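/- arXiv:2510.11511 — 5 statements merged into one kernel-verified Lean document; each statement's English description precedes it below -/
import Mathlib

section
/- Let p be a prime and let f(X) = πX + Σ_{i=2}^{p} C(p,i) X^i ∈ ℤ_p[[X]] where π ∈ pℤ_p. Define f^{(0)}(X) = X and f^{(k)}(X) = f(f^{(k-1)}(X)) for k ≥ 1. Then for every integer t ≥ 0, the polynomial identity f^{(t)}(X + pY) - f^{(t)}(X) ∈ p^{t+1} ℤ_p[X, Y] holds; that is, every coefficient of f^{(t)}(X + pY) - f^{(t)}(X), viewed as a polynomial in X and Y over ℤ_p, is divisible by p^{t+1}. -/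
open Polynomial

private lemma helper_pow {R : Type*} [CommRing R] {c₁ c₂ d : R} (n : ℕ) (b : R)
    (hd : c₂ ∣ d) (hn' : c₁ ∣ (n : R)) (hdd : c₁ * c₂ ∣ d * d) :
    c₁ * c₂ ∣ (b + d) ^ n - b ^ n := by
  rw [add_pow, Finset.sum_range_succ]
  simp only [Nat.choose_self, tsub_self, pow_zero, Nat.cast_one, mul_one]
  rw [add_sub_cancel_right]
  apply Finset.dvd_sum
  intro k hk
  rw [Finset.mem_range] at hk
  rcases eq_or_lt_of_le (Nat.succ_le_of_lt hk) with h | h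
  · -- k = n - 1
    have h1 : n - k = 1 := by omega
    have h2 : n.choose k = n := by
      have hk' : n.choose k = n.choose 1 :=
        Nat.choose_symm_of_eq_add (by omega : n = k + 1)
      rw [hk', Nat.choose_one_right]
    rw [h1, pow_one, h2, mul_comm c₁ c₂, mul_assoc]
    exact (mul_dvd_mul hd hn').mul_left _
  · have h2 : 2 ≤ n - k := by omega
    obtain ⟨j, hj⟩ : ∃ j, n - k = j + 2 := ⟨n - k - 2, by omega⟩
    have : c₁ * c₂ ∣ d ^ (n - k) := by
      rw [hj, pow_add, pow_two]
      exact Dvd.dvd.mul_left hdd _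
    exact (this.mul_left (b ^ k)).mul_right _

/-- For the Lubin–Tate Frobenius lift `f(X) = πX + ∑_{i=2}^p C(p,i) X^i`
with `π ∈ pℤ_p`, every coefficient of `f^{(t)}(X + pY) - f^{(t)}(X)` (as a polynomial
in two variables over `ℤ_p`) is divisible by `p^{t+1}`. -/
theorem stmt0 (p : ℕ) [Fact p.Prime] (π : ℤ_[p]) (hπ : (p : ℤ_[p]) ∣ π)
    (f : Polynomial ℤ_[p])
    (hf : f = Polynomial.C π * Polynomial.X +
      ∑ i ∈ Finset.Icc 2 p, Polynomial.C ((p.choose i : ℤ_[p])) * Polynomial.X ^ i)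
    (t : ℕ) (m : Fin 2 →₀ ℕ) :
    ((p : ℤ_[p]) ^ (t + 1)) ∣
      MvPolynomial.coeff m
        ((Polynomial.aeval
            (MvPolynomial.X 0 + (p : MvPolynomial (Fin 2) ℤ_[p]) * MvPolynomial.X 1)
            ((fun g => f.comp g)^[t] Polynomial.X))
          - Polynomial.aeval (MvPolynomial.X (0 : Fin 2))
              ((fun g => f.comp g)^[t] Polynomial.X)) := by
  have hp : p.Prime := Fact.out
  set u : MvPolynomial (Fin 2) ℤ_[p] :=
    MvPolynomial.X 0 + (p : MvPolynomial (Fin 2) ℤ_[p]) * MvPolynomial.X 1 with hu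
  set v : MvPolynomial (Fin 2) ℤ_[p] := MvPolynomial.X (0 : Fin 2) with hv
  have hCp : (MvPolynomial.C ((p : ℤ_[p])) : MvPolynomial (Fin 2) ℤ_[p])
      = (p : MvPolynomial (Fin 2) ℤ_[p]) := by
    exact_mod_cast MvPolynomial.C_eq_coe_nat p
  have key : ∀ s : ℕ, MvPolynomial.C ((p : ℤ_[p]) ^ (s + 1)) ∣
      (Polynomial.aeval u ((fun g => f.comp g)^[s] Polynomial.X)
        - Polynomial.aeval v ((fun g => f.comp g)^[s] Polynomial.X)) := by
    intro s
    induction s with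
    | zero =>
      simp only [Function.iterate_zero, id_eq, Polynomial.aeval_X, zero_add, pow_one]
      have huv : u - v = MvPolynomial.C ((p : ℤ_[p])) * MvPolynomial.X 1 := by
        rw [hu, hCp]; ring
      rw [huv]
      exact ⟨_, rfl⟩
    | succ s ih =>
      rw [Function.iterate_succ_apply']
      set a : MvPolynomial (Fin 2) ℤ_[p] :=
        Polynomial.aeval u ((fun g => f.comp g)^[s] Polynomial.X) with ha
      set b : MvPolynomial (Fin 2) ℤ_[p] :=
        Polynomial.aeval v ((fun g => f.comp g)^[s] Polynomial.X) with hb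
      have hcomp1 : Polynomial.aeval u (f.comp ((fun g => f.comp g)^[s] Polynomial.X))
          = Polynomial.aeval a f := by rw [Polynomial.aeval_comp]
      have hcomp2 : Polynomial.aeval v (f.comp ((fun g => f.comp g)^[s] Polynomial.X))
          = Polynomial.aeval b f := by rw [Polynomial.aeval_comp]
      rw [hcomp1, hcomp2]
      have halg : ∀ c : ℤ_[p],
          (algebraMap ℤ_[p] (MvPolynomial (Fin 2) ℤ_[p])) c = MvPolynomial.C c := fun _ => rfl
      have hrw : Polynomial.aeval a f - Polynomial.aeval b f
          = MvPolynomial.C π * (a - b) +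
            ∑ i ∈ Finset.Icc 2 p,
              MvPolynomial.C ((p.choose i : ℤ_[p])) * (a ^ i - b ^ i) := by
        rw [hf]
        simp only [map_add, map_mul, map_sum, map_pow, Polynomial.aeval_C, Polynomial.aeval_X,
          halg, mul_sub]
        rw [Finset.sum_sub_distrib]
        ring
      rw [hrw]
      have hCsplit : (MvPolynomial.C ((p : ℤ_[p]) ^ (s + 1 + 1)) : MvPolynomial (Fin 2) ℤ_[p])
          = MvPolynomial.C ((p : ℤ_[p])) * MvPolynomial.C ((p : ℤ_[p]) ^ (s + 1)) := by
        rw [← map_mul]; ring_nf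
      apply dvd_add
      · rw [hCsplit]
        exact mul_dvd_mul (map_dvd (MvPolynomial.C : ℤ_[p] →+* _) hπ) ih
      · apply Finset.dvd_sum
        intro i hi
        rw [Finset.mem_Icc] at hi
        rcases eq_or_lt_of_le hi.2 with hip | hip
        · -- i = p : use helper
          have hab : a = b + (a - b) := by ring
          rw [hab]
          have hd : MvPolynomial.C ((p : ℤ_[p]) ^ (s + 1)) ∣ (a - b) := ih
          have hdd : MvPolynomial.C ((p : ℤ_[p])) * MvPolynomial.C ((p : ℤ_[p]) ^ (s + 1))
              ∣ (a - b) * (a - b) := by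
            apply mul_dvd_mul _ hd
            exact dvd_trans (map_dvd (MvPolynomial.C : ℤ_[p] →+* _)
              (dvd_pow_self _ (by omega : s + 1 ≠ 0))) hd
          have hn' : (MvPolynomial.C ((p : ℤ_[p])) : MvPolynomial (Fin 2) ℤ_[p])
              ∣ (i : MvPolynomial (Fin 2) ℤ_[p]) := by
            rw [hCp, hip]
          have hmain := helper_pow (R := MvPolynomial (Fin 2) ℤ_[p]) i b hd hn' hdd
          rw [hCsplit]
          exact dvd_mul_of_dvd_right hmain _
        · -- i < p : p ∣ choose p i
          have hchoose : (p : ℤ_[p]) ∣ (p.choose i : ℤ_[p]) :=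
            Nat.cast_dvd_cast (hp.dvd_choose_self (by omega) hip)
          rw [hCsplit]
          exact mul_dvd_mul (map_dvd (MvPolynomial.C : ℤ_[p] →+* _) hchoose)
            (dvd_trans ih (sub_dvd_pow_sub_pow a b i))
  exact (MvPolynomial.C_dvd_iff_dvd_coeff ((p : ℤ_[p]) ^ (t + 1)) _).mp (key t) m
end

section
/- Let p be a prime and C_p ∈ M_{g×g}(ℤ) a matrix all of whose entries are divisible by p. Define a sequence of g×g matrices over ℚ by x_{-1} = 0, x_0 = I_g, and p·x_k - C_p·x_{k-1} + x_{k-2} = 0 for k ≥ 1. Then for every k ≥ 0, the entries of x_k lie in p^{-⌊k/2⌋} ℤ_p; equivalently, p^{⌊k/2⌋} x_k has entries in ℤ_p. -/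
/-!
Put `y_k = π^⌊k/2⌋ x_k` and write `C = π D` with `D` integral. Multiplying the recurrence by
`π^⌊k/2⌋ / π` gives `y_{k+2} = D (π^{⌊k/2⌋+1} x_{k+1}) - y_k`, and `⌊(k+1)/2⌋ ≤ ⌊k/2⌋ + 1`, so the
first term is `D` times a multiple of `y_{k+1}` by a power of `π`; integrality propagates by
induction.
-/

namespace Subring

variable {K n : Type*} [CommRing K] [Fintype n] [DecidableEq n] (R : Subring K)

theorem smul_mem_matrix {π : K} (hπ : π ∈ R) {M : Matrix n n K} (hM : M ∈ R.matrix) :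
    π • M ∈ R.matrix :=
  fun i j => R.mul_mem hπ (hM i j)

theorem pow_smul_mem_matrix_of_le {π : K} (hπ : π ∈ R) {M : Matrix n n K} {a b : ℕ}
    (hab : a ≤ b) (hM : π ^ a • M ∈ R.matrix) : π ^ b • M ∈ R.matrix := by
  rw [← Nat.sub_add_cancel hab, pow_add, mul_smul]
  exact R.smul_mem_matrix (R.pow_mem hπ _) hM

theorem pow_half_smul_mem_matrix_of_recurrence {π : K} (hπ : π ∈ R) {D : Matrix n n K}
    (hD : D ∈ R.matrix) {x : ℕ → Matrix n n K} (hx0 : x 0 = 1) (hx1 : x 1 = D)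
    (hrec : ∀ k, π • x (k + 2) = π • D * x (k + 1) - x k) (k : ℕ) :
    π ^ (k / 2) • x k ∈ R.matrix := by
  induction k using Nat.strong_induction_on with
  | _ k ih =>
    match k with
    | 0 => simp [hx0]
    | 1 => simpa [hx1] using hD
    | m + 2 =>
      have hy : π ^ ((m + 2) / 2) • x (m + 2)
          = D * (π ^ (m / 2 + 1) • x (m + 1)) - π ^ (m / 2) • x m := by
        rw [show (m + 2) / 2 = m / 2 + 1 by omega, pow_succ, mul_smul, hrec, smul_sub,
          smul_mul_assoc, smul_smul, ← pow_succ, mul_smul_comm]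
      rw [hy]
      refine R.matrix.sub_mem (R.matrix.mul_mem hD ?_) (ih m (by omega))
      exact R.pow_smul_mem_matrix_of_le hπ (by omega) (ih (m + 1) (by omega))

end Subring

/-- If all entries of `C_p` are integers divisible by `p` and the
matrices `x_k` satisfy `x_{-1} = 0`, `x_0 = 1`, `p x_k - C_p x_{k-1} + x_{k-2} = 0`,
then all entries of `p^{⌊k/2⌋} x_k` are `p`-adic integers. -/
theorem stmt1 (p g : ℕ) [Fact p.Prime]
    (Cp : Matrix (Fin g) (Fin g) ℚ_[p])
    (hCp : ∀ i j, ∃ c : ℤ, Cp i j = (p : ℚ_[p]) * (c : ℚ_[p]))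
    (x : ℕ → Matrix (Fin g) (Fin g) ℚ_[p])
    (hx0 : x 0 = 1)
    (hx1 : (p : ℚ_[p]) • x 1 = Cp)
    (hrec : ∀ k, 2 ≤ k → (p : ℚ_[p]) • x k - Cp * x (k - 1) + x (k - 2) = 0)
    (k : ℕ) (i j : Fin g) :
    ‖(p : ℚ_[p]) ^ (k / 2) * x k i j‖ ≤ 1 := by
  choose c hc using hCp
  set D : Matrix (Fin g) (Fin g) ℚ_[p] := fun i j => (c i j : ℚ_[p])
  have hCpD : Cp = (p : ℚ_[p]) • D := Matrix.ext hc
  have hp : (p : ℚ_[p]) ≠ 0 := Nat.cast_ne_zero.mpr (Fact.out : p.Prime).ne_zero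
  have hpZ : (p : ℚ_[p]) ∈ PadicInt.subring p := natCast_mem _ p
  have hD : D ∈ (PadicInt.subring p).matrix := fun i j => Padic.norm_int_le_one (c i j)
  have hxD : x 1 = D := smul_right_injective _ hp (hx1.trans hCpD)
  have hrec' : ∀ k, (p : ℚ_[p]) • x (k + 2) = (p : ℚ_[p]) • D * x (k + 1) - x k := fun k => by
    rw [← hCpD, ← sub_eq_zero, ← hrec (k + 2) (by omega)]
    simp only [Nat.add_sub_cancel, Nat.add_succ_sub_one]
    abel
  exact (PadicInt.subring p).pow_half_smul_mem_matrix_of_recurrence hpZ hD hx0 hxD hrec' k i j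
end

section
/- Let O be the ring of integers of a finite extension of ℚ_p, Λ = O[[X]], and for a_p ∈ O with ord_p(a_p) > 0 define J = { (g_1, g_2) ∈ Λ ⊕ Λ : (p−1)·g_1(0) = (2−a_p)·g_2(0) }. Then J ∩ p(Λ ⊕ Λ) = pJ. -/
/-! `J` is the equalizer of two `O`-linear maps `Λ ⊕ Λ → O`. If `p • y ∈ J` then `p` kills the
difference of the two maps at `y`, so `y ∈ J` since `O` is torsion-free over itself (when `p = 0`
in `O`, both sides consist of `0` alone). -/

theorem LinearMap.eq_and_exists_eq_smul_iff {R M N : Type*} [Semiring R] [IsCancelMulZero R]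
    [AddCommMonoid M] [Module R M] [AddCommMonoid N] [Module R N] [Module.IsTorsionFree R N]
    (f g : M →ₗ[R] N) (r : R) (x : M) :
    (f x = g x ∧ ∃ y, x = r • y) ↔ ∃ z, f z = g z ∧ x = r • z := by
  constructor
  · rintro ⟨hx, y, rfl⟩
    rcases eq_or_ne r 0 with rfl | hr
    · exact ⟨0, by simp, by simp⟩
    · refine ⟨y, smul_right_injective N hr ?_, rfl⟩
      simpa only [map_smul] using hx
  · rintro ⟨z, hz, rfl⟩
    exact ⟨by simp only [map_smul, hz], z, rfl⟩

theorem stmt10_general (p : ℕ)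
    (O : Type*) [CommRing O] [IsDomain O]
    (ap : O) :
    ∀ x : PowerSeries O × PowerSeries O,
      (((p : O) - 1) * PowerSeries.constantCoeff x.1
          = (2 - ap) * PowerSeries.constantCoeff x.2
        ∧ ∃ y : PowerSeries O × PowerSeries O, x = p • y)
      ↔ ∃ z : PowerSeries O × PowerSeries O,
          (((p : O) - 1) * PowerSeries.constantCoeff z.1
            = (2 - ap) * PowerSeries.constantCoeff z.2) ∧ x = p • z := by
  intro x
  simp only [← Nat.cast_smul_eq_nsmul O p, ← PowerSeries.coeff_zero_eq_constantCoeff_apply]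
  exact LinearMap.eq_and_exists_eq_smul_iff
    (((p : O) - 1) • PowerSeries.coeff 0 ∘ₗ LinearMap.fst O _ _)
    ((2 - ap) • PowerSeries.coeff 0 ∘ₗ LinearMap.snd O _ _) (p : O) x

/-- Let `O` be the ring of integers of a finite extension of `ℚ_p`
(formalized: a complete-type DVR, finite over `ℤ_p`), `Λ = O[[X]]`, `a_p ∈ O`
with `ord_p(a_p) > 0` (i.e. `a_p` a non-unit), and
`J = {(g₁,g₂) ∈ Λ⊕Λ : (p−1)g₁(0) = (2−a_p)g₂(0)}`.  Then `J ∩ p(Λ⊕Λ) = pJ`. -/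
theorem stmt10 (p : ℕ) [Fact p.Prime] (hp : Odd p)
    (O : Type*) [CommRing O] [IsDomain O] [IsDiscreteValuationRing O]
    [Algebra ℤ_[p] O] [Module.Finite ℤ_[p] O]
    (ap : O) (hap : ¬ IsUnit ap) :
    ∀ x : PowerSeries O × PowerSeries O,
      (((p : O) - 1) * PowerSeries.constantCoeff x.1
          = (2 - ap) * PowerSeries.constantCoeff x.2
        ∧ ∃ y : PowerSeries O × PowerSeries O, x = p • y)
      ↔ ∃ z : PowerSeries O × PowerSeries O,
          (((p : O) - 1) * PowerSeries.constantCoeff z.1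
            = (2 - ap) * PowerSeries.constantCoeff z.2) ∧ x = p • z :=
  stmt10_general p O ap
end

section
/- Let O be the valuation ring of a finite extension of ℚ_p. Let 0 → (M'_n) → (M_n) → (M''_n) → 0 be a short exact sequence of projective systems of finitely generated O-modules (exact at each level n, compatible with transition maps). If the Kobayashi ranks ∇M'_n and ∇M''_n are both defined for some n (i.e., the transition maps have finite kernel and cokernel), then ∇M_n is defined and ∇M_n = ∇M'_n + ∇M''_n. -/
/-!
The snake lemma turns the two rows into the exact sequence
`0 → ker π' → ker π → ker π'' → coker π' → coker π → coker π'' → 0`. Finiteness of the outer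
kernels and cokernels forces that of `ker π` and `coker π`, and the alternating sum of lengths
along the sequence vanishes. Over a domain the rank is additive along `0 → N' → N → N'' → 0`.
-/

/-- The length of an `O`-module, as the Krull dimension of its lattice of
submodules, truncated to a natural number. -/
noncomputable def lengthO (O M : Type*) [CommRing O] [AddCommGroup M] [Module O M] : ℕ :=
  (WithBot.unbotD 0 (Order.krullDim (Submodule O M))).toNat

open LinearMap Function

lemma lengthO_eq_toNat_length (R M : Type*) [CommRing R] [AddCommGroup M] [Module R M] :
    lengthO R M = (Module.length R M).toNat := by
  rw [lengthO, ← Module.coe_length, WithBot.unbotD_coe]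

lemma Module.length_ne_top_of_finite (R M : Type*) [CommRing R] [AddCommGroup M] [Module R M]
    [Finite M] : Module.length R M ≠ ⊤ :=
  have := isArtinian_of_finite (R := R) (M := M)
  Module.length_ne_top

section Exact

variable {R A B C : Type*} [CommRing R] [AddCommGroup A] [Module R A] [AddCommGroup B]
  [Module R B] [AddCommGroup C] [Module R C] {f : A →ₗ[R] B} {g : B →ₗ[R] C}

lemma Function.Exact.finite [Finite A] [Finite C] (h : Exact f g) : Finite B := by
  have : Finite (range f) := Set.finite_range f
  have : Finite (B ⧸ range f) := by
    rw [← h.linearMap_ker_eq]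
    exact .of_equiv _ g.quotKerEquivRange.toEquiv.symm
  have : Finite (B ⧸ (range f).toAddSubgroup) := ‹Finite (B ⧸ range f)›
  exact .of_addSubgroup_quotient (H := (range f).toAddSubgroup)

lemma Function.Exact.length_eq_length_range_add_length_range (h : Exact f g) :
    Module.length R B = Module.length R (range f) + Module.length R (range g) :=
  Module.length_eq_add_of_exact (range f).subtype g.rangeRestrict (range f).injective_subtype
    g.surjective_rangeRestrict (by
      rw [LinearMap.exact_iff, ker_rangeRestrict, Submodule.range_subtype, h.linearMap_ker_eq])

lemma Function.Exact.finrank_eq_add [IsDomain R] [Module.Finite R B] (h : Exact f g)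
    (hf : Injective f) (hg : Surjective g) :
    Module.finrank R B = Module.finrank R A + Module.finrank R C := by
  rw [← (ker g).finrank_quotient_add_finrank, (g.quotKerEquivOfSurjective hg).finrank_eq,
    h.linearMap_ker_eq, LinearEquiv.finrank_eq (LinearEquiv.ofInjective f hf), add_comm]

end Exact

theorem Module.length_add_length_add_length_eq_of_exact {R : Type*} [CommRing R]
    {A₁ A₂ A₃ A₄ A₅ A₆ : Type*} [AddCommGroup A₁] [Module R A₁] [AddCommGroup A₂] [Module R A₂]
    [AddCommGroup A₃] [Module R A₃] [AddCommGroup A₄] [Module R A₄]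
    [AddCommGroup A₅] [Module R A₅] [AddCommGroup A₆] [Module R A₆]
    {a₁ : A₁ →ₗ[R] A₂} {a₂ : A₂ →ₗ[R] A₃} {a₃ : A₃ →ₗ[R] A₄} {a₄ : A₄ →ₗ[R] A₅}
    {a₅ : A₅ →ₗ[R] A₆} (h₁ : Function.Injective a₁) (h₂ : Exact a₁ a₂) (h₃ : Exact a₂ a₃)
    (h₄ : Exact a₃ a₄) (h₅ : Exact a₄ a₅) (h₆ : Function.Surjective a₅) :
    length R A₁ + length R A₃ + length R A₅ = length R A₂ + length R A₄ + length R A₆ := by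
  rw [(LinearEquiv.ofInjective a₁ h₁).length_eq, h₂.length_eq_length_range_add_length_range,
    h₃.length_eq_length_range_add_length_range, h₄.length_eq_length_range_add_length_range,
    h₅.length_eq_length_range_add_length_range,
    ← (LinearEquiv.ofTop _ (range_eq_top.mpr h₆)).length_eq]
  ring

section Snake

variable {R : Type*} [CommRing R] {M' M M'' N' N N'' : Type*}
  [AddCommGroup M'] [Module R M'] [AddCommGroup M] [Module R M] [AddCommGroup M''] [Module R M'']
  [AddCommGroup N'] [Module R N'] [AddCommGroup N] [Module R N] [AddCommGroup N''] [Module R N'']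

lemma LinearMap.ker_le_comap_ker_of_comp_eq {f : M' →ₗ[R] M} {f₀ : N' →ₗ[R] N}
    {π' : M' →ₗ[R] N'} {π : M →ₗ[R] N} (hc : π ∘ₗ f = f₀ ∘ₗ π') :
    ker π' ≤ (ker π).comap f := fun x hx => by
  simp only [Submodule.mem_comap, mem_ker] at hx ⊢
  rw [← comp_apply, hc, comp_apply, hx, map_zero]

lemma LinearMap.range_le_comap_range_of_comp_eq {f : M' →ₗ[R] M} {f₀ : N' →ₗ[R] N}
    {π' : M' →ₗ[R] N'} {π : M →ₗ[R] N} (hc : π ∘ₗ f = f₀ ∘ₗ π') :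
    range π' ≤ (range π).comap f₀ := by
  rintro _ ⟨x, rfl⟩
  exact ⟨f x, by rw [← comp_apply, hc, comp_apply]⟩

def LinearMap.kerMap {f : M' →ₗ[R] M} {f₀ : N' →ₗ[R] N} {π' : M' →ₗ[R] N'} {π : M →ₗ[R] N}
    (hc : π ∘ₗ f = f₀ ∘ₗ π') : ker π' →ₗ[R] ker π :=
  f.restrict fun _ hx => ker_le_comap_ker_of_comp_eq hc hx

def LinearMap.cokerMap {f : M' →ₗ[R] M} {f₀ : N' →ₗ[R] N} {π' : M' →ₗ[R] N'} {π : M →ₗ[R] N}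
    (hc : π ∘ₗ f = f₀ ∘ₗ π') : (N' ⧸ range π') →ₗ[R] (N ⧸ range π) :=
  Submodule.mapQ _ _ f₀ (range_le_comap_range_of_comp_eq hc)

lemma LinearMap.injective_kerMap {f : M' →ₗ[R] M} {f₀ : N' →ₗ[R] N} {π' : M' →ₗ[R] N'} {π : M →ₗ[R] N}
    (hc : π ∘ₗ f = f₀ ∘ₗ π') (hf : Injective f) : Injective (kerMap hc) :=
  fun _ _ h => Subtype.ext (hf congr(($h : M)))

lemma LinearMap.surjective_cokerMap {f : M' →ₗ[R] M} {f₀ : N' →ₗ[R] N} {π' : M' →ₗ[R] N'}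
    {π : M →ₗ[R] N} (hc : π ∘ₗ f = f₀ ∘ₗ π') (hf₀ : Surjective f₀) : Surjective (cokerMap hc) := by
  intro z
  obtain ⟨y, rfl⟩ := Submodule.mkQ_surjective _ z
  obtain ⟨x, rfl⟩ := hf₀ y
  exact ⟨Submodule.Quotient.mk x, rfl⟩

variable {f₁ : M' →ₗ[R] M} {g₁ : M →ₗ[R] M''} {f₀ : N' →ₗ[R] N} {g₀ : N →ₗ[R] N''}
  {π' : M' →ₗ[R] N'} {π : M →ₗ[R] N} {π'' : M'' →ₗ[R] N''}
  (hc₁ : π ∘ₗ f₁ = f₀ ∘ₗ π') (hc₂ : π'' ∘ₗ g₁ = g₀ ∘ₗ π)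

include hc₁ in
lemma Function.Exact.exact_kerMap (hf : Exact f₁ g₁) (hf₀ : Injective f₀) :
    Exact (kerMap hc₁) (kerMap hc₂) := by
  rintro ⟨x, hx⟩
  simp only [LinearMap.kerMap, Subtype.ext_iff, coe_restrict_apply, ZeroMemClass.coe_zero,
    Set.mem_range, Subtype.exists, mem_ker]
  refine ⟨fun hgx => ?_, fun ⟨y, _, hy⟩ => hy ▸ hf.apply_apply_eq_zero y⟩
  obtain ⟨y, rfl⟩ := (hf x).mp hgx
  refine ⟨y, hf₀ ?_, rfl⟩
  rw [map_zero, ← LinearMap.comp_apply, ← hc₁, LinearMap.comp_apply, mem_ker.mp hx]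

include hc₂ in
lemma Function.Exact.exact_cokerMap (hg : Exact f₀ g₀) (hg₁ : Surjective g₁) :
    Exact (cokerMap hc₁) (cokerMap hc₂) := by
  refine (hg.exact_mapQ_iff _ _).mpr (inf_le_right.trans (le_of_eq ?_))
  rw [← range_comp, ← hc₂, range_comp, range_eq_top.mpr hg₁, Submodule.map_top]

include hc₁ hc₂ in
theorem SnakeLemma.length_ker_add_length_coker (hf : Exact f₁ g₁) (hg : Exact f₀ g₀)
    (hf₁ : Injective f₁) (hg₁ : Surjective g₁) (hf₀ : Injective f₀) (hg₀ : Surjective g₀) :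
    Module.length R (ker π') + Module.length R (ker π'') + Module.length R (N ⧸ range π) =
      Module.length R (ker π) + Module.length R (N' ⧸ range π')
        + Module.length R (N'' ⧸ range π'') := by
  let δ := SnakeLemma.δ' π' π π'' f₁ g₁ hf f₀ g₀ hg hc₁.symm hc₂.symm (ker π'').subtype
    (exact_subtype_ker_map π'') (range π').mkQ (exact_map_mkQ_range π') hg₁ hf₀
  refine Module.length_add_length_add_length_eq_of_exact (a₃ := δ) (injective_kerMap hc₁ hf₁)
    (hf.exact_kerMap hc₁ hc₂ hf₀) ?_ ?_ (hg.exact_cokerMap hc₁ hc₂ hg₁) (surjective_cokerMap hc₂ hg₀)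
  · exact SnakeLemma.exact_δ'_right _ _ _ _ _ _ _ _ _ _ _ (ker π).subtype
      (exact_subtype_ker_map π) _ _ _ _ _ _ (kerMap hc₂) rfl (ker π'').injective_subtype
  · exact SnakeLemma.exact_δ'_left _ _ _ _ _ _ _ _ _ _ _ _ _ _ _ (range π).mkQ
      (exact_map_mkQ_range π) _ _ (cokerMap hc₁) (Submodule.mapQ_mkQ _ _ _)
      (Submodule.mkQ_surjective _)

end Snake

theorem stmt12_general
    (O : Type*) [CommRing O] [IsDomain O]
    (M' M M'' N' N N'' : Type*)
    [AddCommGroup M'] [Module O M']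
    [AddCommGroup M] [Module O M]
    [AddCommGroup M''] [Module O M'']
    [AddCommGroup N'] [Module O N']
    [AddCommGroup N] [Module O N] [Module.Finite O N]
    [AddCommGroup N''] [Module O N'']
    (f1 : M' →ₗ[O] M) (g1 : M →ₗ[O] M'')
    (f0 : N' →ₗ[O] N) (g0 : N →ₗ[O] N'')
    (hf1 : Function.Injective f1) (hg1 : Function.Surjective g1)
    (hex1 : LinearMap.range f1 = LinearMap.ker g1)
    (hf0 : Function.Injective f0) (hg0 : Function.Surjective g0)
    (hex0 : LinearMap.range f0 = LinearMap.ker g0)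
    (π' : M' →ₗ[O] N') (π : M →ₗ[O] N) (π'' : M'' →ₗ[O] N'')
    (hcomm1 : π.comp f1 = f0.comp π') (hcomm2 : π''.comp g1 = g0.comp π)
    (hker' : Finite (LinearMap.ker π')) (hcok' : Finite (N' ⧸ LinearMap.range π'))
    (hker'' : Finite (LinearMap.ker π'')) (hcok'' : Finite (N'' ⧸ LinearMap.range π'')) :
    Finite (LinearMap.ker π) ∧ Finite (N ⧸ LinearMap.range π) ∧
    ((lengthO O (LinearMap.ker π) : ℤ) - lengthO O (N ⧸ LinearMap.range π)
        + Module.finrank O N)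
      = ((lengthO O (LinearMap.ker π') : ℤ) - lengthO O (N' ⧸ LinearMap.range π')
            + Module.finrank O N')
        + ((lengthO O (LinearMap.ker π'') : ℤ) - lengthO O (N'' ⧸ LinearMap.range π'')
            + Module.finrank O N'') := by
  have hexact1 : Exact f1 g1 := LinearMap.exact_iff.mpr hex1.symm
  have hexact0 : Exact f0 g0 := LinearMap.exact_iff.mpr hex0.symm
  have hker : Finite (ker π) := (hexact1.exact_kerMap hcomm1 hcomm2 hf0).finite
  have hcok : Finite (N ⧸ range π) := (hexact0.exact_cokerMap hcomm1 hcomm2 hg1).finite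
  have hlength := congrArg ENat.toNat (SnakeLemma.length_ker_add_length_coker hcomm1 hcomm2
    hexact1 hexact0 hf1 hg1 hf0 hg0)
  simp only [ne_eq, ENat.add_eq_top, Module.length_ne_top_of_finite, or_self, not_false_eq_true,
    ENat.toNat_add] at hlength
  have hrank := hexact0.finrank_eq_add hf0 hg0
  refine ⟨hker, hcok, ?_⟩
  simp only [lengthO_eq_toNat_length]
  omega

/-- Additivity of the Kobayashi rank `∇` in short exact sequences
of projective systems of finitely generated modules over the valuation ring `O`
of a finite extension of `ℚ_p` (at a fixed level: transition maps `π', π, π''`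
compatible with level-wise short exact sequences).  If `∇` is defined for the
outer two systems then it is defined for the middle one and `∇M = ∇M' + ∇M''`. -/
theorem stmt12 (p : ℕ) [Fact p.Prime]
    (O : Type*) [CommRing O] [IsDomain O] [IsDiscreteValuationRing O]
    [Algebra ℤ_[p] O] [Module.Finite ℤ_[p] O]
    (M' M M'' N' N N'' : Type*)
    [AddCommGroup M'] [Module O M'] [Module.Finite O M']
    [AddCommGroup M] [Module O M] [Module.Finite O M]
    [AddCommGroup M''] [Module O M''] [Module.Finite O M'']
    [AddCommGroup N'] [Module O N'] [Module.Finite O N']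
    [AddCommGroup N] [Module O N] [Module.Finite O N]
    [AddCommGroup N''] [Module O N''] [Module.Finite O N'']
    (f1 : M' →ₗ[O] M) (g1 : M →ₗ[O] M'')
    (f0 : N' →ₗ[O] N) (g0 : N →ₗ[O] N'')
    (hf1 : Function.Injective f1) (hg1 : Function.Surjective g1)
    (hex1 : LinearMap.range f1 = LinearMap.ker g1)
    (hf0 : Function.Injective f0) (hg0 : Function.Surjective g0)
    (hex0 : LinearMap.range f0 = LinearMap.ker g0)
    (π' : M' →ₗ[O] N') (π : M →ₗ[O] N) (π'' : M'' →ₗ[O] N'')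
    (hcomm1 : π.comp f1 = f0.comp π') (hcomm2 : π''.comp g1 = g0.comp π)
    (hker' : Finite (LinearMap.ker π')) (hcok' : Finite (N' ⧸ LinearMap.range π'))
    (hker'' : Finite (LinearMap.ker π'')) (hcok'' : Finite (N'' ⧸ LinearMap.range π'')) :
    Finite (LinearMap.ker π) ∧ Finite (N ⧸ LinearMap.range π) ∧
    ((lengthO O (LinearMap.ker π) : ℤ) - lengthO O (N ⧸ LinearMap.range π)
        + Module.finrank O N)
      = ((lengthO O (LinearMap.ker π') : ℤ) - lengthO O (N' ⧸ LinearMap.range π')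
            + Module.finrank O N')
        + ((lengthO O (LinearMap.ker π'') : ℤ) - lengthO O (N'' ⧸ LinearMap.range π'')
            + Module.finrank O N'') :=
  stmt12_general O M' M M'' N' N N'' f1 g1 f0 g0 hf1 hg1 hex1 hf0 hg0 hex0 π' π π'' hcomm1 hcomm2
    hker' hcok' hker'' hcok''
end

section
/- Let p be a prime, π ∈ pℤ_p with ord_p(π/p − 1) > 0, f(X) = πX + Σ_{i=2}^{p} C(p,i) X^i, and let x_k be g×g matrices over ℚ_p with x_{-1} = 0, x_0 = I_g, p x_k − C_p x_{k-1} + x_{k-2} = 0, where C_p has entries divisible by p. Define ℓ(x) = Σ_{k≥0} x_k f^{(k)}(x) (applied coordinatewise to a vector x of g variables). Then u ∗ ℓ ≡ 0 mod p, where u(T) = p − C_p T + T^2; that is, ℓ(x^{p^2}) − C_p ℓ(x^p) + p ℓ(x) has all coefficients in p ℤ_p. -/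
/-!
Write `F_k = f^{(k)}(X)`. Since `f ≡ X^p mod p`, Honda's congruence
`F_{k+1} ≡ F_k(X^p) mod p^{k+1}` holds; iterating it shows that `p^{k-m}` divides the `m`-th
coefficient of `F_k`, which makes all the series involved converge.

The recurrence reads `C_p x_k = p x_{k+1} + x_{k-1}` (with `x_{-1} = 0`), so after reindexing, the
`m`-th coefficient of `ℓ(x^{p²}) - C_p ℓ(x^p) + p ℓ(x)` is `∑ c_k x_k`, where `c_k` is the `m`-th
coefficient of `F_k(X^{p²}) - F_{k+1}(X^p) + p (F_k - F_{k-1}(X^p))`. Honda's congruence puts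
`c_k` in `p^{k+1} ℤ_p`, and the recurrence with `p ∣ C_p` gives `|x_k| ≤ p^{⌊k/2⌋}`, so every term,
hence by the ultrametric inequality the sum, has norm at most `1/p`.
-/

open Polynomial Filter Topology

section FrobeniusLift

variable {R : Type*} [CommRing R] {p : ℕ}

theorem pow_succ_dvd_pow_sub_pow {a b : R} {n : ℕ} (h : (p : R) ^ (n + 1) ∣ a - b) :
    (p : R) ^ (n + 2) ∣ a ^ p - b ^ p := by
  rw [← geom_sum₂_mul, pow_succ' _ (n + 1)]
  exact mul_dvd_mul (dvd_geom_sum₂_self ((dvd_pow_self _ n.succ_ne_zero).trans h)) h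

theorem natCast_pow_dvd_coeff {P : R[X]} {n : ℕ} (h : (p : R[X]) ^ n ∣ P) (m : ℕ) :
    (p : R) ^ n ∣ P.coeff m := by
  rw [← map_natCast C, ← C_pow, C_dvd_iff_dvd_coeff] at h
  exact h m

variable {f : R[X]}

theorem pow_succ_dvd_comp_sub_comp (hf : (p : R[X]) ∣ f - X ^ p) {A B : R[X]} {n : ℕ}
    (h : (p : R[X]) ^ (n + 1) ∣ A - B) : (p : R[X]) ^ (n + 2) ∣ f.comp A - f.comp B := by
  obtain ⟨r, hr⟩ := hf
  have hr_comp : A - B ∣ r.comp A - r.comp B := by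
    have h := sub_dvd_eval_sub A B (r.map C)
    rwa [eval_map, eval_map] at h
  have hsplit : f.comp A - f.comp B = (A ^ p - B ^ p) + p * (r.comp A - r.comp B) := by
    rw [sub_eq_iff_eq_add'.mp hr]
    simp only [add_comp, X_pow_comp, natCast_mul_comp]
    ring
  have hpr : (p : R[X]) ^ (n + 2) ∣ p * (r.comp A - r.comp B) := by
    rw [pow_succ' _ (n + 1)]
    exact mul_dvd_mul_left _ (h.trans hr_comp)
  rw [hsplit]
  exact dvd_add (pow_succ_dvd_pow_sub_pow h) hpr

theorem pow_succ_dvd_iterate_comp_sub_expand (hf : (p : R[X]) ∣ f - X ^ p) (k : ℕ) :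
    (p : R[X]) ^ (k + 1) ∣ (f.comp ·)^[k + 1] X - expand R p ((f.comp ·)^[k] X) := by
  induction k with
  | zero => simpa using hf
  | succ k ih =>
    have hexpand :
        expand R p ((f.comp ·)^[k + 1] X) = f.comp (expand R p ((f.comp ·)^[k] X)) := by
      rw [Function.iterate_succ_apply', expand_eq_comp_X_pow, comp_assoc, ← expand_eq_comp_X_pow]
    rw [Function.iterate_succ_apply' _ (k + 1), hexpand]
    exact pow_succ_dvd_comp_sub_comp hf ih

theorem iterate_comp_coeff_zero (hf0 : f.coeff 0 = 0) (k : ℕ) :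
    ((f.comp ·)^[k] X).coeff 0 = 0 := by
  rw [coeff_zero_eq_eval_zero, iterate_comp_eval, eval_X]
  exact Function.iterate_fixed (by rwa [← coeff_zero_eq_eval_zero]) k

theorem pow_sub_dvd_coeff_iterate_comp (hp : 1 < p) (hf : (p : R[X]) ∣ f - X ^ p)
    (hf0 : f.coeff 0 = 0) (k m : ℕ) : (p : R) ^ (k - m) ∣ ((f.comp ·)^[k] X).coeff m := by
  induction k generalizing m with
  | zero => simp
  | succ k ih =>
    have hcong := natCast_pow_dvd_coeff (pow_succ_dvd_iterate_comp_sub_expand hf k) m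
    have hexpand : (p : R) ^ (k + 1 - m) ∣ (expand R p ((f.comp ·)^[k] X)).coeff m := by
      rw [coeff_expand (by omega)]
      split_ifs
      · rcases Nat.eq_zero_or_pos m with rfl | hm
        · simp [iterate_comp_coeff_zero hf0]
        · have := Nat.div_lt_self hm hp
          exact (pow_dvd_pow _ (by omega)).trans (ih (m / p))
      · exact dvd_zero _
    simpa using dvd_add ((pow_dvd_pow _ (Nat.sub_le _ _)).trans hcong) hexpand

theorem pow_sub_dvd_coeff_expand_iterate_comp (hp : 1 < p) (hf : (p : R[X]) ∣ f - X ^ p)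
    (hf0 : f.coeff 0 = 0) {n : ℕ} (hn : 0 < n) (k m : ℕ) :
    (p : R) ^ (k - m) ∣ (expand R n ((f.comp ·)^[k] X)).coeff m := by
  rw [coeff_expand hn]
  split_ifs
  · have := Nat.div_le_self m n
    exact (pow_dvd_pow _ (by omega)).trans (pow_sub_dvd_coeff_iterate_comp hp hf hf0 k _)
  · exact dvd_zero _

theorem pow_succ_dvd_coeff_expand_sub (hf : (p : R[X]) ∣ f - X ^ p) (k m : ℕ) :
    (p : R) ^ (k + 1) ∣ (expand R (p ^ 2) ((f.comp ·)^[k] X)).coeff m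
      - (expand R p ((f.comp ·)^[k + 1] X)).coeff m
      + p * (((f.comp ·)^[k] X).coeff m
        - if k = 0 then 0 else (expand R p ((f.comp ·)^[k - 1] X)).coeff m) := by
  have hfrob : (p : R) ^ (k + 1) ∣ (expand R (p ^ 2) ((f.comp ·)^[k] X)).coeff m
      - (expand R p ((f.comp ·)^[k + 1] X)).coeff m := by
    have h := map_dvd (expand R p) (pow_succ_dvd_iterate_comp_sub_expand hf k)
    rw [map_pow, map_natCast, map_sub, ← expand_mul, ← pow_two] at h
    simpa only [coeff_sub] using natCast_pow_dvd_coeff (dvd_sub_comm.mp h) m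
  refine dvd_add hfrob ?_
  cases k with
  | zero => simp
  | succ k =>
    rw [if_neg k.succ_ne_zero, Nat.add_sub_cancel, pow_succ']
    simpa only [coeff_sub] using
      mul_dvd_mul_left (p : R) (natCast_pow_dvd_coeff (pow_succ_dvd_iterate_comp_sub_expand hf k) m)

theorem natCast_dvd_sub_X_pow (hp : p.Prime) {π : R} (hπ : (p : R) ∣ π) :
    (p : R[X]) ∣ C π * X + ∑ i ∈ Finset.Icc 2 p, C (p.choose i : R) * X ^ i - X ^ p := by
  rw [← Finset.Ico_insert_right hp.two_le, Finset.sum_insert (by simp), Nat.choose_self,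
    Nat.cast_one, C_1, one_mul, add_sub_assoc, add_sub_cancel_left, ← map_natCast C]
  refine dvd_add (dvd_mul_of_dvd_left (_root_.map_dvd C hπ) _) (Finset.dvd_sum fun i hi => ?_)
  obtain ⟨hi2, hip⟩ := Finset.mem_Ico.mp hi
  exact dvd_mul_of_dvd_left
    (_root_.map_dvd C (Nat.cast_dvd_cast (hp.dvd_choose_self (by omega) hip))) _

end FrobeniusLift

section UltrametricRecurrence

theorem norm_mul_apply_le {K : Type*} [NormedRing K] [IsUltrametricDist K]
    {l m n : Type*} [Fintype m] {A : Matrix l m K} {B : Matrix m n K} {i : l} {j : n} {a b : ℝ}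
    (ha : 0 ≤ a) (hb : 0 ≤ b) (hA : ∀ k, ‖A i k‖ ≤ a) (hB : ∀ k, ‖B k j‖ ≤ b) :
    ‖(A * B) i j‖ ≤ a * b :=
  IsUltrametricDist.norm_sum_le_of_forall_le_of_nonneg (mul_nonneg ha hb) fun k _ =>
    (norm_mul_le _ _).trans (mul_le_mul (hA k) (hB k) (norm_nonneg _) ha)

variable {ι : Type*} [Fintype ι]

theorem norm_apply_le_of_recurrence {K : Type*} [NormedField K] [IsUltrametricDist K]
    [DecidableEq ι] {ϖ : K} {C : Matrix ι ι K} {x : ℕ → Matrix ι ι K} (hϖ0 : ϖ ≠ 0)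
    (hϖ1 : ‖ϖ‖ ≤ 1) (hC : ∀ i j, ‖C i j‖ ≤ ‖ϖ‖) (hx0 : x 0 = 1) (h1 : C * x 0 = ϖ • x 1)
    (hrec : ∀ k, C * x (k + 1) = ϖ • x (k + 2) + x k) (k : ℕ) (i j : ι) :
    ‖x k i j‖ ≤ ‖ϖ‖⁻¹ ^ (k / 2) := by
  have hϖpos : 0 < ‖ϖ‖ := norm_pos_iff.mpr hϖ0
  have hr1 : 1 ≤ ‖ϖ‖⁻¹ := (one_le_inv₀ hϖpos).mpr hϖ1
  induction k using Nat.strong_induction_on generalizing i j with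
  | _ k ih =>
    match k with
    | 0 =>
      rw [hx0, Matrix.one_apply]
      split_ifs <;> simp
    | 1 =>
      have hentry := congrFun (congrFun h1 i) j
      rw [hx0, Matrix.mul_one, Matrix.smul_apply, smul_eq_mul] at hentry
      have : ‖ϖ‖ * ‖x 1 i j‖ ≤ ‖ϖ‖ * 1 := by rw [← norm_mul, ← hentry, mul_one]; exact hC i j
      simpa using le_of_mul_le_mul_left this hϖpos
    | k + 2 =>
      have hentry : ϖ * x (k + 2) i j = (C * x (k + 1)) i j - x k i j := by
        have := congrFun (congrFun (hrec k) i) j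
        rw [Matrix.add_apply, Matrix.smul_apply, smul_eq_mul] at this
        rw [this, add_sub_cancel_right]
      have hprod : ‖(C * x (k + 1)) i j‖ ≤ ‖ϖ‖⁻¹ ^ (k / 2) :=
        calc ‖(C * x (k + 1)) i j‖ ≤ ‖ϖ‖ * ‖ϖ‖⁻¹ ^ ((k + 1) / 2) :=
              norm_mul_apply_le (norm_nonneg _) (by positivity) (hC i)
                fun l => ih (k + 1) (by omega) l j
          _ ≤ ‖ϖ‖ * ‖ϖ‖⁻¹ ^ (k / 2 + 1) := by
              gcongr ‖ϖ‖ * ?_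
              exact pow_le_pow_right₀ hr1 (by omega)
          _ = ‖ϖ‖⁻¹ ^ (k / 2) := by rw [pow_succ]; field_simp
      have hscaled : ‖ϖ‖ * ‖x (k + 2) i j‖ ≤ ‖ϖ‖⁻¹ ^ (k / 2) := by
        rw [← norm_mul, hentry, sub_eq_add_neg]
        refine (IsUltrametricDist.norm_add_le_max _ _).trans (max_le hprod ?_)
        rw [norm_neg]
        exact ih k (by omega) i j
      calc ‖x (k + 2) i j‖ = ‖ϖ‖⁻¹ * (‖ϖ‖ * ‖x (k + 2) i j‖) := by field_simp
        _ ≤ ‖ϖ‖⁻¹ * ‖ϖ‖⁻¹ ^ (k / 2) := by gcongr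
        _ = ‖ϖ‖⁻¹ ^ ((k + 2) / 2) := by rw [show (k + 2) / 2 = k / 2 + 1 by omega, pow_succ']

theorem mul_tsum_smul_eq_of_recurrence {K : Type*} [CommRing K] [TopologicalSpace K]
    [IsTopologicalRing K] [T2Space K] {ϖ : K} {C : Matrix ι ι K} {x : ℕ → Matrix ι ι K}
    (h1 : C * x 0 = ϖ • x 1)
    (hrec : ∀ k, C * x (k + 1) = ϖ • x (k + 2) + x k) {b b' : ℕ → K} (hb'0 : b' 0 = 0)
    (hb' : ∀ k, b' (k + 1) = b k) (hb : Summable fun k => b k • x k)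
    (hb_succ : Summable fun k => b (k + 1) • x k) (hb'_sum : Summable fun k => b' k • x k) :
    C * ∑' k, b k • x k = ∑' k, b (k + 1) • x k + ϖ • ∑' k, b' k • x k := by
  have hleft : HasSum (fun k => b (k + 1) • (C * x (k + 1)))
      (C * ∑' k, b k • x k - b 0 • (ϖ • x 1)) := by
    rw [← h1, ← Matrix.mul_smul]
    have := (hasSum_nat_add_iff' 1).mpr (hb.hasSum.mul_left C)
    simpa [Matrix.mul_smul] using this
  have hright : HasSum (fun k => b (k + 1) • (C * x (k + 1)))
      (∑' k, b (k + 1) • x k + ϖ • (∑' k, b' k • x k - b 0 • x 1)) := by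
    have hshift := (hasSum_nat_add_iff' 2).mpr hb'_sum.hasSum
    simp only [Finset.sum_range_succ, Finset.sum_range_zero, hb'0, hb', zero_smul, zero_add]
      at hshift
    convert hb_succ.hasSum.add (hshift.const_smul ϖ) using 1
    funext k
    rw [hrec, smul_add, smul_comm, add_comm]
  linear_combination (norm := module) hleft.unique hright

end UltrametricRecurrence

section PadicSeries

variable {p : ℕ} [hp : Fact p.Prime] {ι : Type*} {x : ℕ → Matrix ι ι ℚ_[p]}

theorem norm_coe_mul_le_zpow {a b : ℕ} {c : ℤ_[p]} (hc : (p : ℤ_[p]) ^ a ∣ c) {y : ℚ_[p]}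
    (hy : ‖y‖ ≤ (p : ℝ) ^ b) : ‖(c : ℚ_[p]) * y‖ ≤ (p : ℝ) ^ ((b : ℤ) - a) := by
  obtain ⟨d, rfl⟩ := hc
  push_cast
  rw [norm_mul, norm_mul, Padic.norm_p_pow]
  calc (p : ℝ) ^ (-(a : ℤ)) * ‖(d : ℚ_[p])‖ * ‖y‖
        ≤ (p : ℝ) ^ (-(a : ℤ)) * 1 * (p : ℝ) ^ b := by
        gcongr
        exact d.norm_le_one
    _ = (p : ℝ) ^ ((b : ℤ) - a) := by
        rw [mul_one, sub_eq_neg_add, zpow_add₀ (by exact_mod_cast hp.out.ne_zero), zpow_natCast]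

theorem summable_coe_smul (hx : ∀ k i j, ‖x k i j‖ ≤ (p : ℝ) ^ (k / 2)) {c : ℕ → ℤ_[p]}
    {N : ℕ} (hc : ∀ k, (p : ℤ_[p]) ^ (k - N) ∣ c k) : Summable fun k => (c k : ℚ_[p]) • x k := by
  refine Pi.summable.mpr fun i => Pi.summable.mpr fun j => ?_
  refine NonarchimedeanAddGroup.summable_of_tendsto_cofinite_zero ?_
  rw [Nat.cofinite_eq_atTop, tendsto_zero_iff_norm_tendsto_zero]
  have hp1 : (1 : ℝ) ≤ p := by exact_mod_cast hp.out.one_le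
  have hbound : ∀ k, ‖((c k : ℚ_[p]) • x k) i j‖ ≤ (p : ℝ) ^ N * (p : ℝ)⁻¹ ^ (k / 2) := by
    intro k
    rw [Matrix.smul_apply, smul_eq_mul, inv_pow, ← zpow_natCast, ← zpow_natCast, ← zpow_neg,
      ← zpow_add₀ (by positivity)]
    exact (norm_coe_mul_le_zpow (hc k) (hx k i j)).trans (zpow_le_zpow_right₀ hp1 (by omega))
  have hdecay : Tendsto (fun k => (p : ℝ) ^ N * (p : ℝ)⁻¹ ^ (k / 2)) atTop (𝓝 0) := by
    have hhalf : Tendsto (fun k : ℕ => k / 2) atTop atTop :=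
      tendsto_atTop_atTop.mpr fun n => ⟨2 * n, fun k hk => by omega⟩
    simpa using ((tendsto_pow_atTop_nhds_zero_of_lt_one (r := (p : ℝ)⁻¹) (by positivity)
      (inv_lt_one_of_one_lt₀ (by exact_mod_cast hp.out.one_lt))).comp hhalf).const_mul _
  exact squeeze_zero (fun _ => norm_nonneg _) hbound hdecay

theorem norm_tsum_coe_smul_apply_le (hx : ∀ k i j, ‖x k i j‖ ≤ (p : ℝ) ^ (k / 2))
    {c : ℕ → ℤ_[p]} (hc : ∀ k, (p : ℤ_[p]) ^ (k + 1) ∣ c k) (i j : ι) :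
    ‖(∑' k, (c k : ℚ_[p]) • x k) i j‖ ≤ (p : ℝ)⁻¹ := by
  have hs := summable_coe_smul hx (N := 0) fun k => (pow_dvd_pow _ (by omega)).trans (hc k)
  rw [← (Pi.hasSum.mp (Pi.hasSum.mp hs.hasSum i) j).tsum_eq]
  refine IsUltrametricDist.norm_tsum_le_of_forall_le_of_nonneg (by positivity) fun k => ?_
  rw [Matrix.smul_apply, smul_eq_mul, ← zpow_neg_one]
  exact (norm_coe_mul_le_zpow (hc k) (hx k i j)).trans
    (zpow_le_zpow_right₀ (by exact_mod_cast hp.out.one_le) (by omega))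

theorem tsum_sub_mul_tsum_add_smul_tsum [Fintype ι] {C : Matrix ι ι ℚ_[p]}
    (hx : ∀ k i j, ‖x k i j‖ ≤ (p : ℝ) ^ (k / 2)) (h1 : C * x 0 = (p : ℚ_[p]) • x 1)
    (hrec : ∀ k, C * x (k + 1) = (p : ℚ_[p]) • x (k + 2) + x k) {α β a : ℕ → ℤ_[p]} {N : ℕ}
    (hα : ∀ k, (p : ℤ_[p]) ^ (k - N) ∣ α k) (hβ : ∀ k, (p : ℤ_[p]) ^ (k - N) ∣ β k)
    (ha : ∀ k, (p : ℤ_[p]) ^ (k - N) ∣ a k) :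
    ∑' k, (α k : ℚ_[p]) • x k - C * ∑' k, (β k : ℚ_[p]) • x k
        + (p : ℚ_[p]) • ∑' k, (a k : ℚ_[p]) • x k
      = ∑' k, ((α k - β (k + 1) + p * (a k - if k = 0 then 0 else β (k - 1)) : ℤ_[p]) : ℚ_[p])
          • x k := by
  have hβ_succ : ∀ k, (p : ℤ_[p]) ^ (k - N) ∣ β (k + 1) :=
    fun k => (pow_dvd_pow _ (by omega)).trans (hβ (k + 1))
  have hβ_pred : ∀ k, (p : ℤ_[p]) ^ (k - (N + 1)) ∣ if k = 0 then 0 else β (k - 1) := by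
    rintro (_ | k)
    · exact dvd_zero _
    · simpa using hβ k
  have hβ_succ_sum := summable_coe_smul hx hβ_succ
  have hβ_pred_sum := summable_coe_smul hx hβ_pred
  rw [mul_tsum_smul_eq_of_recurrence h1 hrec (by simp) (by simp) (summable_coe_smul hx hβ)
    hβ_succ_sum hβ_pred_sum]
  have hsum := ((summable_coe_smul hx hα).hasSum.sub
    (hβ_succ_sum.hasSum.add (hβ_pred_sum.hasSum.const_smul (p : ℚ_[p])))).add
    ((summable_coe_smul hx ha).hasSum.const_smul (p : ℚ_[p]))
  exact hsum.tsum_eq.symm.trans (tsum_congr fun k => by push_cast; module)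

end PadicSeries

/-- With `f(X) = πX + ∑_{i=2}^p C(p,i)X^i`, `π ≡ p mod p²`,
`x_k` the matrices of the recurrence `p x_k − C_p x_{k-1} + x_{k-2} = 0`
(`x_{-1}=0`, `x_0 = I`, entries of `C_p` divisible by `p`), and
`ℓ(x) = ∑_{k≥0} x_k f^{(k)}(x)` (whose `m`-th coefficient is the convergent sum
`L m = ∑'_k (coeff_m f^{(k)}) · x_k`), one has `u ∗ ℓ ≡ 0 mod p` for
`u(T) = p − C_p T + T²`: every coefficient of `ℓ(x^{p²}) − C_p ℓ(x^p) + p ℓ(x)`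
has all entries in `p ℤ_p`. -/
theorem stmt18 (p g : ℕ) [Fact p.Prime] (π : ℤ_[p])
    (hπ : ((p : ℤ_[p]) * p) ∣ (π - p))
    (f : Polynomial ℤ_[p])
    (hf : f = Polynomial.C π * Polynomial.X +
      ∑ i ∈ Finset.Icc 2 p, Polynomial.C ((p.choose i : ℤ_[p])) * Polynomial.X ^ i)
    (Cp : Matrix (Fin g) (Fin g) ℚ_[p])
    (hCp : ∀ i j, ∃ c : ℤ, Cp i j = (p : ℚ_[p]) * (c : ℚ_[p]))
    (x : ℕ → Matrix (Fin g) (Fin g) ℚ_[p])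
    (hx0 : x 0 = 1)
    (hx1 : (p : ℚ_[p]) • x 1 = Cp)
    (hrec : ∀ k, 2 ≤ k → (p : ℚ_[p]) • x k - Cp * x (k - 1) + x (k - 2) = 0)
    (L : ℕ → Matrix (Fin g) (Fin g) ℚ_[p])
    (hL : ∀ m, L m =
      ∑' k : ℕ, (((((fun q => f.comp q)^[k] Polynomial.X).coeff m : ℤ_[p]) : ℚ_[p])) • x k) :
    ∀ m : ℕ, 1 ≤ m → ∀ i j : Fin g,
      ‖((if p ^ 2 ∣ m then L (m / p ^ 2) else 0)
          - Cp * (if p ∣ m then L (m / p) else 0)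
          + (p : ℚ_[p]) • L m) i j‖ ≤ ((p : ℝ))⁻¹ := by
  intro m _ i j
  have hp : p.Prime := Fact.out
  have hfX : (p : ℤ_[p][X]) ∣ f - X ^ p :=
    hf ▸ natCast_dvd_sub_X_pow hp (dvd_sub_self_right.mp ((dvd_mul_right _ _).trans hπ))
  have hf0 : f.coeff 0 = 0 := by simp [hf]
  have hC : ∀ i j, ‖Cp i j‖ ≤ ‖(p : ℚ_[p])‖ := fun i j => by
    obtain ⟨c, hc⟩ := hCp i j
    rw [hc, norm_mul]
    exact mul_le_of_le_one_right (norm_nonneg _) (Padic.norm_int_le_one c)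
  have h1 : Cp * x 0 = (p : ℚ_[p]) • x 1 := by rw [hx0, Matrix.mul_one, hx1]
  have hrec' : ∀ k, Cp * x (k + 1) = (p : ℚ_[p]) • x (k + 2) + x k := fun k => by
    have h := hrec (k + 2) (by omega)
    rw [show k + 2 - 1 = k + 1 by omega, Nat.add_sub_cancel] at h
    linear_combination (norm := module) -h
  have hx : ∀ k i j, ‖x k i j‖ ≤ (p : ℝ) ^ (k / 2) := fun k i j => by
    simpa [Padic.norm_p] using norm_apply_le_of_recurrence (by exact_mod_cast hp.ne_zero)
      (by simp [Padic.norm_p, inv_le_one_iff₀, hp.one_le]) hC hx0 h1 hrec' k i j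
  have hLexpand : ∀ n, 0 < n → (if n ∣ m then L (m / n) else 0)
      = ∑' k, ((expand ℤ_[p] n ((f.comp ·)^[k] X)).coeff m : ℚ_[p]) • x k := fun n hn => by
    simp_rw [coeff_expand hn]
    split_ifs <;> simp [hL]
  have hp2 : 0 < p ^ 2 := pow_pos hp.pos 2
  rw [hLexpand (p ^ 2) hp2, hLexpand p hp.pos, hL m,
    tsum_sub_mul_tsum_add_smul_tsum hx h1 hrec'
      (pow_sub_dvd_coeff_expand_iterate_comp hp.one_lt hfX hf0 hp2 · m)
      (pow_sub_dvd_coeff_expand_iterate_comp hp.one_lt hfX hf0 hp.pos · m)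
      (pow_sub_dvd_coeff_iterate_comp hp.one_lt hfX hf0 · m)]
  exact norm_tsum_coe_smul_apply_le hx (pow_succ_dvd_coeff_expand_sub hfX · m) i j
end
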